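/- Let a₁,…,a_n be distinct reals, ε₁,…,ε_n ∈ {-1,1}, Δᵢ(a) = εᵢ(a-aᵢ), let I ⊆ ℝ be an open interval on which Δᵢ > 0 for all i, let x(a) = ∑_{i=1}^n ξᵢ Δᵢ(a)^{-1/2} with ξᵢ ∈ ℝ, b̃_k(a) = (-1)^k ∑_{i=1}^n (ξᵢ / Δᵢ(a)^{1/2}) σ^i_{k-1}, and c̃_k(a) = ((-1)^{k+1}/2) [ ∑_{i=1}^n (ξᵢ²/Δᵢ(a)) σ^i_{k-1} + ∑_{i≠j} (ξᵢ ξ_j / (Δᵢ(a) Δ_j(a))^{1/2}) ( σ^{ij}_{k-1} + a σ^{ij}_{k-2} ) ]. Then for every 1 ≤ k ≤ n one has c̃_k′(a) = − b̃_k(a) x′(a) on I. -/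

import Mathlib

open Polynomial

/-- For a polynomial `Q` of degree `d` written as `Q(X) = ∑_{k=0}^{d} (-1)^k σ_k X^{d-k}`,
`sig d Q k` is the coefficient `σ_k`, extended by `0` outside `0 ≤ k ≤ d`. -/
noncomputable def sig (d : ℕ) (Q : Polynomial ℝ) (k : ℤ) : ℝ :=
  if 0 ≤ k ∧ k ≤ (d : ℤ) then (-1 : ℝ) ^ k * Q.coeff (d - k.toNat) else 0

/-- `σ^i_k` defined by `P(X)/(X-aᵢ) = ∑_{k=0}^{n-1} (-1)^k σ^i_k X^{n-1-k}`,
with `σ^i_{-1} = σ^i_n = 0`. -/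
noncomputable def sigmaI (n : ℕ) (a : Fin n → ℝ) (i : Fin n) (k : ℤ) : ℝ :=
  sig (n - 1) (∏ j ∈ Finset.univ.erase i, (X - C (a j))) k

/-- `σ^{ij}_k` (for `i ≠ j`) defined by
`P(X)/((X-aᵢ)(X-a_j)) = ∑_{k=0}^{n-2} (-1)^k σ^{ij}_k X^{n-2-k}`,
with `σ^{ij}_{-2} = σ^{ij}_{-1} = σ^{ij}_{n-1} = σ^{ij}_n = 0`. -/
noncomputable def sigmaIJ (n : ℕ) (a : Fin n → ℝ) (i j : Fin n) (k : ℤ) : ℝ :=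
  sig (n - 2) (∏ l ∈ (Finset.univ.erase i).erase j, (X - C (a l))) k

/-- The function `x(a) = ∑ᵢ ξᵢ Δᵢ(a)^{-1/2}`. -/
noncomputable def xfun (n : ℕ) (a ε ξ : Fin n → ℝ) (t : ℝ) : ℝ :=
  ∑ i, ξ i * (ε i * (t - a i)) ^ (-(1/2) : ℝ)

/-- The coefficient `b̃_k(a) = (-1)^k ∑ᵢ (ξᵢ / Δᵢ(a)^{1/2}) σ^i_{k-1}`. -/
noncomputable def btil (n : ℕ) (a ε ξ : Fin n → ℝ) (k : ℕ) (t : ℝ) : ℝ :=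
  (-1 : ℝ) ^ k * ∑ i, ξ i / (ε i * (t - a i)) ^ ((1/2) : ℝ) * sigmaI n a i ((k : ℤ) - 1)

/-- The coefficient `c̃_k(a) = ((-1)^{k+1}/2) [ ∑ᵢ (ξᵢ²/Δᵢ(a)) σ^i_{k-1}
+ ∑_{i≠j} (ξᵢξ_j/(Δᵢ(a)Δ_j(a))^{1/2}) ( σ^{ij}_{k-1} + a σ^{ij}_{k-2} ) ]`. -/
noncomputable def ctil (n : ℕ) (a ε ξ : Fin n → ℝ) (k : ℕ) (t : ℝ) : ℝ :=
  ((-1 : ℝ) ^ (k + 1) / 2) *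
    ((∑ i, ξ i ^ 2 / (ε i * (t - a i)) * sigmaI n a i ((k : ℤ) - 1)) +
      ∑ i, ∑ j ∈ Finset.univ.erase i,
        ξ i * ξ j / ((ε i * (t - a i)) * (ε j * (t - a j))) ^ ((1/2) : ℝ) *
          (sigmaIJ n a i j ((k : ℤ) - 1) + t * sigmaIJ n a i j ((k : ℤ) - 2)))

/-!
Write `yᵢ = xTerm ξᵢ εᵢ aᵢ`, i.e. `yᵢ(a) = ξᵢ Δᵢ(a)^{-1/2}`. Where all `Δᵢ > 0` we have `x = ∑ yᵢ`,
`b̃_k = (-1)^k ∑ yᵢ σ^i_{k-1}` and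
`c̃_k = ((-1)^{k+1}/2) [∑ yᵢ² σ^i_{k-1} + ∑_{i≠j} yᵢ y_j (σ^{ij}_{k-1} + a σ^{ij}_{k-2})]`.
Each `yᵢ` is homogeneous of degree `-1/2` in `a - aᵢ`, so `(a - aᵢ) yᵢ' = -yᵢ/2`. Together with
`σ^i_{k-1} = σ^{ij}_{k-1} + a_j σ^{ij}_{k-2}` this absorbs the terms coming from the
explicit factor `a`, and the product rule turns `c̃_k'` into
`(-1)^{k+1} (∑ yᵢ σ^i_{k-1}) (∑ y_j') = -b̃_k x'`.
-/

theorem sig_of_neg {d : ℕ} {Q : ℝ[X]} {k : ℤ} (hk : k < 0) : sig d Q k = 0 :=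
  if_neg fun h => h.1.not_gt hk

theorem sig_natCast_eq_coeff_reflect {d : ℕ} {Q : ℝ[X]} (hQ : Q.natDegree ≤ d) (k : ℕ) :
    sig d Q k = (-1) ^ k * (reflect d Q).coeff k := by
  rw [sig, coeff_reflect, zpow_natCast, Int.toNat_natCast]
  split_ifs with hk
  · rw [revAt_le (by omega)]
  · rw [revAt_eq_self_of_lt (by omega), coeff_eq_zero_of_natDegree_lt (by omega), mul_zero]

theorem reflect_one_X_sub_C (c : ℝ) : reflect 1 (X - C c) = 1 - C c * X := by
  rw [reflect_sub, ← pow_one X, reflect_monomial, reflect_C]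
  simp

theorem sig_X_sub_C_mul {d : ℕ} {Q : ℝ[X]} (hQ : Q.natDegree ≤ d) (c : ℝ) (k : ℤ) :
    sig (d + 1) ((X - C c) * Q) k = sig d Q k + c * sig d Q (k - 1) := by
  have hXQ : ((X - C c) * Q).natDegree ≤ d + 1 :=
    natDegree_mul_le.trans (by rw [natDegree_X_sub_C]; omega)
  have hrefl : reflect (d + 1) ((X - C c) * Q) = (1 - C c * X) * reflect d Q := by
    rw [add_comm, reflect_mul _ _ (natDegree_X_sub_C c).le hQ, reflect_one_X_sub_C]
  rcases lt_or_ge k 0 with hk | hk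
  · rw [sig_of_neg hk, sig_of_neg hk, sig_of_neg (by omega)]; ring
  lift k to ℕ using hk
  rw [sig_natCast_eq_coeff_reflect hXQ, sig_natCast_eq_coeff_reflect hQ, hrefl, sub_mul, one_mul,
    mul_assoc, coeff_sub, coeff_C_mul]
  cases k with
  | zero => simp [sig_of_neg]
  | succ m =>
    rw [show ((m + 1 : ℕ) : ℤ) - 1 = m by push_cast; ring, sig_natCast_eq_coeff_reflect hQ,
      coeff_X_mul]
    ring

theorem sigmaIJ_comm (n : ℕ) (a : Fin n → ℝ) (i j : Fin n) (k : ℤ) :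
    sigmaIJ n a i j k = sigmaIJ n a j i k := by
  rw [sigmaIJ, sigmaIJ, Finset.erase_right_comm]

theorem sigmaI_eq_sigmaIJ_add_mul {n : ℕ} (a : Fin n → ℝ) {i j : Fin n} (hij : i ≠ j) (k : ℤ) :
    sigmaI n a i k = sigmaIJ n a i j k + a j * sigmaIJ n a i j (k - 1) := by
  have hj : j ∈ Finset.univ.erase i := Finset.mem_erase.2 ⟨hij.symm, Finset.mem_univ j⟩
  have hn : n - 1 = n - 2 + 1 := by
    have := Fin.val_ne_of_ne hij; have := i.isLt; have := j.isLt; omega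
  rw [sigmaI, sigmaIJ, ← Finset.mul_prod_erase _ _ hj, hn]
  refine sig_X_sub_C_mul ?_ _ _
  rw [natDegree_finsetProd_X_sub_C_eq_card, Finset.card_erase_of_mem hj,
    Finset.card_erase_of_mem (Finset.mem_univ i), Finset.card_univ, Fintype.card_fin]
  omega

theorem two_mul_sum_mul_sum {ι R : Type*} [Fintype ι] [DecidableEq ι] [CommSemiring R]
    (u v : ι → R) :
    2 * ((∑ i, u i) * ∑ j, v j) =
      ∑ i, 2 * (u i * v i) + ∑ i, ∑ j ∈ Finset.univ.erase i, (u i * v j + u j * v i) := by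
  have hswap : ∑ i, ∑ j ∈ Finset.univ.erase i, u j * v i =
      ∑ i, ∑ j ∈ Finset.univ.erase i, u i * v j :=
    Finset.sum_comm' (by simp [Finset.mem_erase, eq_comm])
  have hsplit : ∀ i, ∑ j, u i * v j = u i * v i + ∑ j ∈ Finset.univ.erase i, u i * v j :=
    fun i => (Finset.add_sum_erase _ _ (Finset.mem_univ i)).symm
  rw [Finset.sum_mul_sum, Finset.sum_congr rfl fun i _ => hsplit i]
  simp only [Finset.sum_add_distrib, hswap, ← Finset.mul_sum]
  ring

noncomputable def xTerm (ξ ε a u : ℝ) : ℝ := ξ * (ε * (u - a)) ^ (-(1/2) : ℝ)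

section xTerm

variable {ξ ε a u : ℝ}

theorem div_rpow_half_eq_xTerm (h : 0 ≤ ε * (u - a)) :
    ξ / (ε * (u - a)) ^ ((1/2) : ℝ) = xTerm ξ ε a u := by
  rw [xTerm, Real.rpow_neg h, div_eq_mul_inv]

theorem xTerm_sq (h : 0 ≤ ε * (u - a)) : xTerm ξ ε a u ^ 2 = ξ ^ 2 / (ε * (u - a)) := by
  rw [← div_rpow_half_eq_xTerm h, div_pow, ← Real.sqrt_eq_rpow, Real.sq_sqrt h]

theorem xTerm_mul_xTerm {ξ' ε' a' : ℝ} (h : 0 ≤ ε * (u - a)) (h' : 0 ≤ ε' * (u - a')) :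
    xTerm ξ ε a u * xTerm ξ' ε' a' u =
      ξ * ξ' / ((ε * (u - a)) * (ε' * (u - a'))) ^ ((1/2) : ℝ) := by
  rw [← div_rpow_half_eq_xTerm h, ← div_rpow_half_eq_xTerm h', Real.mul_rpow h h',
    mul_div_mul_comm]

theorem hasDerivAt_xTerm (h : 0 < ε * (u - a)) :
    HasDerivAt (xTerm ξ ε a) (-xTerm ξ ε a u / (2 * (u - a))) u := by
  obtain ⟨hε, hua⟩ := mul_ne_zero_iff.mp h.ne'
  have hpow := (((hasDerivAt_id' u).sub_const a).const_mul ε).rpow_const (p := -(1/2)) (.inl h.ne')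
  refine (hpow.const_mul ξ).congr_deriv ?_
  rw [xTerm, Real.rpow_sub_one h.ne']
  field_simp

end xTerm

open Filter Topology in
theorem eventually_forall_mul_sub_pos {n : ℕ} {a ε : Fin n → ℝ} {t : ℝ}
    (hpos : ∀ i, 0 < ε i * (t - a i)) : ∀ᶠ u in 𝓝 t, ∀ i, 0 < ε i * (u - a i) :=
  eventually_all.2 fun i => continuousAt_const.eventually_lt (by fun_prop) (hpos i)

section coefficients

variable {n : ℕ} (a ε ξ : Fin n → ℝ) (k : ℕ)

theorem btil_eq_sum_xTerm {t : ℝ} (hpos : ∀ i, 0 < ε i * (t - a i)) :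
    btil n a ε ξ k t =
      (-1) ^ k * ∑ i, xTerm (ξ i) (ε i) (a i) t * sigmaI n a i ((k : ℤ) - 1) := by
  simp only [btil, div_rpow_half_eq_xTerm (hpos _).le]

theorem ctil_eq_sum_xTerm {u : ℝ} (hpos : ∀ i, 0 < ε i * (u - a i)) :
    ctil n a ε ξ k u = ((-1) ^ (k + 1) / 2) *
      (∑ i, xTerm (ξ i) (ε i) (a i) u ^ 2 * sigmaI n a i ((k : ℤ) - 1) +
        ∑ i, ∑ j ∈ Finset.univ.erase i, xTerm (ξ i) (ε i) (a i) u * xTerm (ξ j) (ε j) (a j) u *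
          (sigmaIJ n a i j ((k : ℤ) - 1) + u * sigmaIJ n a i j ((k : ℤ) - 2))) := by
  simp only [ctil, xTerm_sq (hpos _).le, xTerm_mul_xTerm (hpos _).le (hpos _).le]

variable {a ε ξ}

theorem hasDerivAt_xfun {t : ℝ} {D : Fin n → ℝ}
    (hD : ∀ i, HasDerivAt (xTerm (ξ i) (ε i) (a i)) (D i) t) :
    HasDerivAt (xfun n a ε ξ) (∑ i, D i) t :=
  HasDerivAt.fun_sum fun i _ => hD i

theorem hasDerivAt_ctil {t : ℝ} (hpos : ∀ i, 0 < ε i * (t - a i)) {D : Fin n → ℝ}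
    (hD : ∀ i, HasDerivAt (xTerm (ξ i) (ε i) (a i)) (D i) t) :
    HasDerivAt (ctil n a ε ξ k) (((-1) ^ (k + 1) / 2) *
      (∑ i, 2 * (xTerm (ξ i) (ε i) (a i) t * sigmaI n a i ((k : ℤ) - 1) * D i) +
        ∑ i, ∑ j ∈ Finset.univ.erase i,
          ((D i * xTerm (ξ j) (ε j) (a j) t + xTerm (ξ i) (ε i) (a i) t * D j) *
              (sigmaIJ n a i j ((k : ℤ) - 1) + t * sigmaIJ n a i j ((k : ℤ) - 2)) +
            xTerm (ξ i) (ε i) (a i) t * xTerm (ξ j) (ε j) (a j) t *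
              sigmaIJ n a i j ((k : ℤ) - 2)))) t := by
  refine HasDerivAt.congr_of_eventuallyEq ?_
    ((eventually_forall_mul_sub_pos hpos).mono fun u hu => ctil_eq_sum_xTerm a ε ξ k hu)
  refine .const_mul _ (.add (.fun_sum fun i _ => ?_) (.fun_sum fun i _ => .fun_sum fun j _ => ?_))
  · exact (((hD i).pow 2).mul_const _).congr_deriv (by ring)
  · exact (((hD i).mul (hD j)).mul
      (((hasDerivAt_id' t).mul_const _).const_add _)).congr_deriv (by rw [Pi.mul_apply]; ring)

end coefficients

theorem deriv_formula_eq_of_euler {n : ℕ} (a : Fin n → ℝ) (k : ℕ) {t : ℝ} {Y D : Fin n → ℝ}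
    (heuler : ∀ i, (t - a i) * D i = -Y i / 2) :
    ((-1) ^ (k + 1) / 2) *
      (∑ i, 2 * (Y i * sigmaI n a i ((k : ℤ) - 1) * D i) +
        ∑ i, ∑ j ∈ Finset.univ.erase i,
          ((D i * Y j + Y i * D j) *
              (sigmaIJ n a i j ((k : ℤ) - 1) + t * sigmaIJ n a i j ((k : ℤ) - 2)) +
            Y i * Y j * sigmaIJ n a i j ((k : ℤ) - 2))) =
      -((-1) ^ k * ∑ i, Y i * sigmaI n a i ((k : ℤ) - 1)) * ∑ i, D i := by
  have hpair : ∀ i, ∀ j ∈ Finset.univ.erase i,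
      (D i * Y j + Y i * D j) *
          (sigmaIJ n a i j ((k : ℤ) - 1) + t * sigmaIJ n a i j ((k : ℤ) - 2)) +
        Y i * Y j * sigmaIJ n a i j ((k : ℤ) - 2) =
      Y i * sigmaI n a i ((k : ℤ) - 1) * D j + Y j * sigmaI n a j ((k : ℤ) - 1) * D i := by
    intro i j hj
    have hij : i ≠ j := (Finset.ne_of_mem_erase hj).symm
    rw [sigmaI_eq_sigmaIJ_add_mul a hij, sigmaI_eq_sigmaIJ_add_mul a hij.symm,
      sigmaIJ_comm n a j i, sigmaIJ_comm n a j i, show (k : ℤ) - 1 - 1 = k - 2 by ring]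
    linear_combination (Y j * sigmaIJ n a i j ((k : ℤ) - 2)) * heuler i +
      (Y i * sigmaIJ n a i j ((k : ℤ) - 2)) * heuler j
  rw [Finset.sum_congr rfl fun i _ => Finset.sum_congr rfl (hpair i), ← two_mul_sum_mul_sum]
  ring

theorem stmt9_general (n : ℕ) (a : Fin n → ℝ)
    (ε : Fin n → ℝ)
    (I : Set ℝ)
    (hΔ : ∀ i, ∀ t ∈ I, 0 < ε i * (t - a i))
    (ξ : Fin n → ℝ) :
    ∀ k : ℕ, 1 ≤ k → k ≤ n → ∀ t ∈ I,
      deriv (ctil n a ε ξ k) t = - btil n a ε ξ k t * deriv (xfun n a ε ξ) t := by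
  intro k _ _ t ht
  have hpos i : 0 < ε i * (t - a i) := hΔ i t ht
  obtain ⟨D, hD, heuler⟩ : ∃ D : Fin n → ℝ,
      (∀ i, HasDerivAt (xTerm (ξ i) (ε i) (a i)) (D i) t) ∧
        ∀ i, (t - a i) * D i = -xTerm (ξ i) (ε i) (a i) t / 2 :=
    ⟨_, fun i => hasDerivAt_xTerm (hpos i),
      fun i => by have := (mul_ne_zero_iff.mp (hpos i).ne').2; field_simp⟩
  rw [(hasDerivAt_ctil k hpos hD).deriv, (hasDerivAt_xfun hD).deriv,
    btil_eq_sum_xTerm a ε ξ k hpos]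
  exact deriv_formula_eq_of_euler a k heuler

/-- For every `1 ≤ k ≤ n`, `c̃_k′(a) = − b̃_k(a) x′(a)` on `I`. -/
theorem stmt9 (n : ℕ) (a : Fin n → ℝ) (ha : Function.Injective a)
    (ε : Fin n → ℝ) (hε : ∀ i, ε i = 1 ∨ ε i = -1)
    (I : Set ℝ) (hIopen : IsOpen I) (hIconn : I.OrdConnected)
    (hΔ : ∀ i, ∀ t ∈ I, 0 < ε i * (t - a i))
    (ξ : Fin n → ℝ) :
    ∀ k : ℕ, 1 ≤ k → k ≤ n → ∀ t ∈ I,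
      deriv (ctil n a ε ξ k) t = - btil n a ε ξ k t * deriv (xfun n a ε ξ) t :=
  stmt9_general n a ε I hΔ ξ
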